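/- The Černý automaton C_n (n ≥ 2) is quasi-Eulerian with respect to c = 1, and consequently 𝔠(C_n) ≤ 2n(n−1). -/

import Mathlib

open Matrix

/-- The 0-1 transition matrix of a letter: `(p,q)`-entry is 1 iff `δ q a = p`. -/
def letterMat {n k : ℕ} (δ : Fin n → Fin k → Fin n) (a : Fin k) :
    Matrix (Fin n) (Fin n) ℝ :=
  fun p q => if δ q a = p then 1 else 0

/-- The matrix of a word, satisfying `[u][K] = [K·u]`. -/
def wordMat {n k : ℕ} (δ : Fin n → Fin k → Fin n) (w : List (Fin k)) :
    Matrix (Fin n) (Fin n) ℝ :=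
  (w.reverse.map (letterMat δ)).prod

/-- The action of a word on a state. -/
def act {n k : ℕ} (δ : Fin n → Fin k → Fin n) (w : List (Fin k)) (q : Fin n) : Fin n :=
  w.foldl δ q

/-- A word is a reset word if it maps all states to one state. -/
def IsReset {n k : ℕ} (δ : Fin n → Fin k → Fin n) (w : List (Fin k)) : Prop :=
  ∀ p q : Fin n, act δ w p = act δ w q

/-- `A` is quasi-Eulerian with respect to `c`. -/
def QuasiEulerian {n k : ℕ} (δ : Fin n → Fin k → Fin n) (c : ℕ) : Prop :=
  ∃ (E : Finset (Fin n)) (s : Fin n) (p : Fin k → ℝ),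
    s ∈ E ∧ E.card = n - c ∧
    (∀ a, 0 < p a) ∧ (∑ a, p a = 1) ∧
    (∀ q a, δ q a ∈ E → δ q a ≠ s → q ∈ E) ∧
    (∀ i ∈ E, i ≠ s → ∑ j, (∑ a, p a • letterMat δ a) i j = 1)

/-- The Černý automaton `C_n` on states `0, …, n-1`: letter `0` (i.e. `a`) is
the cyclic shift `i ↦ i + 1 (mod n)`, letter `1` (i.e. `b`) fixes every state
except the last, which it sends to `0`. -/
def cerny (n : ℕ) [NeZero n] : Fin n → Fin 2 → Fin n := fun i a =>
  if a = 0 then ⟨(i.val + 1) % n, Nat.mod_lt _ (Nat.pos_of_ne_zero (NeZero.ne n))⟩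
  else if i.val = n - 1 then ⟨0, Nat.pos_of_ne_zero (NeZero.ne n)⟩ else i

/-!
Take `E` to be all states except `n - 1` with entry state `0`, and `p` uniform. The only
state outside `E` is `n - 1`, which both letters send to the entry state, and every
state other than `0` and `n - 1` has exactly one preimage under each letter, so its row of `S` sums
to `p(a) + p(b) = 1`. For the length bound, `a^(n-1) b` maps every state `i > 0` to `i - 1` and
fixes `0`, so `(a^(n-1) b)^(n-1)` is a reset word of length `n(n-1)`.
-/

section Automaton

variable {n k : ℕ} (δ : Fin n → Fin k → Fin n)

theorem act_append (u v : List (Fin k)) : act δ (u ++ v) = act δ v ∘ act δ u :=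
  funext fun _ => List.foldl_append

theorem act_flatten_replicate (m : ℕ) (u : List (Fin k)) :
    act δ (List.replicate m u).flatten = (act δ u)^[m] := by
  induction m with
  | zero => rfl
  | succ m ih =>
    rw [List.replicate_succ', List.flatten_append, List.flatten_singleton, act_append, ih,
      Function.iterate_succ']

theorem sum_letterMat_row_eq_one {a : Fin k} {i : Fin n} (h : ∃! q, δ q a = i) :
    ∑ q, letterMat δ a i q = 1 := by
  obtain ⟨j, hj, huniq⟩ := h
  simp only [letterMat]
  rw [Finset.sum_eq_single j (fun q _ hq => if_neg (mt (huniq q) hq)) (by simp)]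
  exact if_pos hj

theorem sum_weighted_letterMat_row_eq_one (p : Fin k → ℝ) (hp : ∑ a, p a = 1) {i : Fin n}
    (h : ∀ a, ∃! q, δ q a = i) : ∑ j, (∑ a, p a • letterMat δ a) i j = 1 := by
  simp only [Matrix.sum_apply, Matrix.smul_apply, smul_eq_mul]
  rw [Finset.sum_comm]
  simp only [← Finset.mul_sum, sum_letterMat_row_eq_one δ (h _), mul_one, hp]

end Automaton

section Cerny

variable {n : ℕ} [NeZero n]

def cernyLast (n : ℕ) [NeZero n] : Fin n := ⟨n - 1, Nat.sub_one_lt (NeZero.ne n)⟩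

theorem cernyLast_ne_zero (hn : 2 ≤ n) : cernyLast n ≠ 0 := by
  rw [Ne, Fin.ext_iff]
  simp only [cernyLast, Fin.val_zero]
  omega

theorem cerny_apply_zero (i : Fin n) : cerny n i 0 = i + 1 := by
  ext
  simp [cerny, Fin.val_add]

theorem cerny_apply_one_of_ne {i : Fin n} (hi : i ≠ cernyLast n) : cerny n i 1 = i := by
  have hval : i.val ≠ n - 1 := fun h => hi (Fin.ext h)
  simp [cerny, hval]

theorem cerny_cernyLast (a : Fin 2) : cerny n (cernyLast n) a = 0 := by
  ext
  fin_cases a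
  · simp [cerny, cernyLast, Nat.sub_add_cancel (NeZero.one_le : 1 ≤ n)]
  · simp [cerny, cernyLast]

theorem existsUnique_cerny_eq {i : Fin n} (hi0 : i ≠ 0) (hi : i ≠ cernyLast n) (a : Fin 2) :
    ∃! q, cerny n q a = i := by
  fin_cases a
  · refine ⟨i - 1, by simp [cerny_apply_zero], fun q hq => ?_⟩
    exact eq_sub_of_add_eq ((cerny_apply_zero q).symm.trans hq)
  · refine ⟨i, cerny_apply_one_of_ne hi, fun q hq => ?_⟩
    by_cases hq' : q = cernyLast n
    · exact absurd (hq.symm.trans (hq' ▸ cerny_cernyLast 1)) hi0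
    · exact (cerny_apply_one_of_ne hq').symm.trans hq

theorem quasiEulerian_cerny (hn : 2 ≤ n) : QuasiEulerian (cerny n) 1 := by
  refine ⟨Finset.univ.erase (cernyLast n), 0, fun _ => 1 / 2,
    Finset.mem_erase.2 ⟨(cernyLast_ne_zero hn).symm, Finset.mem_univ _⟩, by simp,
    fun _ => by norm_num, by norm_num, ?_, ?_⟩
  · intro q a _ hne
    refine Finset.mem_erase.2 ⟨?_, Finset.mem_univ _⟩
    rintro rfl
    exact hne (cerny_cernyLast a)
  · intro i hi hi0
    exact sum_weighted_letterMat_row_eq_one _ _ (by norm_num)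
      (existsUnique_cerny_eq hi0 (Finset.ne_of_mem_erase hi))

def cernyBlock (n : ℕ) : List (Fin 2) := List.replicate (n - 1) 0 ++ [1]

theorem length_cernyBlock : (cernyBlock n).length = n := by
  simp [cernyBlock, Nat.sub_add_cancel (NeZero.one_le : 1 ≤ n)]

theorem val_act_cerny_replicate_zero (m : ℕ) (i : Fin n) :
    (act (cerny n) (List.replicate m 0) i).val = (i.val + m) % n := by
  induction m with
  | zero => simp [act, Nat.mod_eq_of_lt i.isLt]
  | succ m ih =>
    rw [List.replicate_succ', act_append, Function.comp_apply]
    change (cerny n _ 0).val = _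
    rw [cerny_apply_zero, Fin.val_add, ih, Fin.val_one', Nat.add_mod_mod, Nat.mod_add_mod,
      add_assoc]

theorem val_act_cernyBlock (i : Fin n) : (act (cerny n) (cernyBlock n) i).val = i.val - 1 := by
  have hi := i.isLt
  rw [cernyBlock, act_append, Function.comp_apply]
  set j := act (cerny n) (List.replicate (n - 1) 0) i
  have hj : j.val = (i.val + (n - 1)) % n := val_act_cerny_replicate_zero _ i
  change (cerny n j 1).val = _
  by_cases hi0 : i.val = 0
  · have hlast : j = cernyLast n := by
      ext
      rw [hj, hi0, zero_add, Nat.mod_eq_of_lt (by omega)]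
      rfl
    rw [hlast, cerny_cernyLast, hi0]
    rfl
  · have hpred : j.val = i.val - 1 := by
      rw [hj, show i.val + (n - 1) = i.val - 1 + n by omega, Nat.add_mod_right,
        Nat.mod_eq_of_lt (by omega)]
    have hne : j ≠ cernyLast n := fun h => by
      rw [Fin.ext_iff, hpred] at h
      exact absurd h (by simp only [cernyLast]; omega)
    rw [cerny_apply_one_of_ne hne, hpred]

theorem val_act_replicate_cernyBlock (m : ℕ) (i : Fin n) :
    (act (cerny n) (List.replicate m (cernyBlock n)).flatten i).val = i.val - m := by
  rw [act_flatten_replicate]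
  induction m with
  | zero => rfl
  | succ m ih => rw [Function.iterate_succ_apply', val_act_cernyBlock, ih, Nat.sub_sub]

theorem isReset_cerny : IsReset (cerny n) (List.replicate (n - 1) (cernyBlock n)).flatten := by
  intro p q
  ext
  rw [val_act_replicate_cernyBlock, val_act_replicate_cernyBlock]
  omega

end Cerny

/-- The Černý automaton `C_n` (`n ≥ 2`) is quasi-Eulerian with respect to
`c = 1`, and consequently its reset length is at most `2n(n-1)`. -/
theorem stmt12 (n : ℕ) [NeZero n] (hn : 2 ≤ n) :
    QuasiEulerian (cerny n) 1 ∧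
    ∃ w : List (Fin 2), IsReset (cerny n) w ∧ w.length ≤ 2 * n * (n - 1) := by
  refine ⟨quasiEulerian_cerny hn, _, isReset_cerny, ?_⟩
  simp only [List.length_flatten, List.map_replicate, length_cernyBlock, List.sum_replicate,
    smul_eq_mul]
  nlinarith
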